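/- arXiv:0911.0469 — 2 statements merged into one kernel-verified Lean document; each statement's English description precedes it below -/
import Mathlib

section
/- If A ↪ B is a monomorphism of simplicial sets and X → Y is an inner fibration, then the induced map X^B → X^A ×_{Y^A} Y^B is an inner fibration. In particular, if X is a quasi-category then so is the internal mapping object X^A for any simplicial set A. -/
open CategoryTheory Simplicial Opposite Limits MonoidalCategory

namespace Paper

/-- The 0-coskeleton `E S` of a set `S`: the simplicial set with
`(E S)_n = S^{n+1}`, i.e. the nerve of the groupoid with object set `S`
and exactly one morphism between each ordered pair of objects. -/
def E (S : Type) : SSet where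
  obj m := Fin (m.unop.len + 1) → S
  map f := TypeCat.ofHom fun α => α ∘ f.unop.toOrderHom

/-- The constant map `X ⟶ E S` at a point `s : S`.  For `X = Δ[0]` this is
the inclusion of the vertex `s` into `E S`. -/
def constE (X : SSet) {S : Type} (s : S) : X ⟶ E S where
  app m := TypeCat.ofHom fun _ => fun _ => s

/-- The constant map `X ⟶ Δ[n]` at the vertex `i`.  For `n = 0` this is the
canonical map `X ⟶ Δ[0]` to the terminal simplicial set. -/
def constSimplex (X : SSet) (n : ℕ) (i : Fin (n + 1)) : X ⟶ Δ[n] where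
  app m := TypeCat.ofHom fun _ => SSet.stdSimplex.objEquiv.symm (SimplexCategory.const m.unop ⦋n⦌ i)
  naturality _ _ _ := rfl

/-- The edge inclusion `Δ[1] ⟶ E (Fin 2)`, i.e. the nondegenerate
1-simplex of `E¹` from the vertex `0` to the vertex `1`. -/
def edgeE : Δ[1] ⟶ E (Fin 2) where
  app m := TypeCat.ofHom fun α => fun i => SSet.stdSimplex.asOrderHom α i

/-- A map of simplicial sets is an inner fibration if it has the right lifting
property with respect to all inner horn inclusions `Λ[n, i] ⟶ Δ[n]`, `0 < i < n`. -/
def InnerFibration {X Y : SSet} (p : X ⟶ Y) : Prop :=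
  ∀ (n : ℕ) (i : Fin (n + 1)), 0 < i → i < Fin.last n →
    HasLiftingProperty (Λ[n, i].ι) p

/-- A 1-simplex `f` of a simplicial set `X`, with `d₁ f = a` and `d₀ f = b`,
is a quasi-isomorphism if there are a 1-simplex `g` with `d₁ g = b`, `d₀ g = a`
and 2-simplices `σ`, `τ` with `d₂ σ = f`, `d₀ σ = g`, `d₁ σ = s₀ a` and
`d₂ τ = g`, `d₀ τ = f`, `d₁ τ = s₀ b`. -/
def IsQuasiIso {X : SSet} (f : X _⦋1⦌) : Prop :=
  ∃ (g : X _⦋1⦌) (σ τ : X _⦋2⦌),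
    X.δ 1 g = X.δ 0 f ∧ X.δ 0 g = X.δ 1 f ∧
    X.δ 2 σ = f ∧ X.δ 0 σ = g ∧ X.δ 1 σ = X.σ 0 (X.δ 1 f) ∧
    X.δ 2 τ = g ∧ X.δ 0 τ = f ∧ X.δ 1 τ = X.σ 0 (X.δ 0 f)

/-- The pushout-product `f □ g : (A × D) ∪_{A × C} (B × C) ⟶ B × D`
of two maps `f : A ⟶ B` and `g : C ⟶ D` of simplicial sets. -/
noncomputable def pushoutProd {A B C D : SSet.{u_1}} (f : A ⟶ B) (g : C ⟶ D) :
    pushout (f ▷ C) (A ◁ g) ⟶ B ⊗ D :=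
  pushout.desc (B ◁ g) (f ▷ D) (whisker_exchange f g).symm

/-- The inclusion `A ⟶ A × E¹` at the vertex `s` of `E¹ = E (Fin 2)`. -/
noncomputable def incE1 (A : SSet) (s : Fin 2) : A ⟶ A ⊗ E (Fin 2) :=
  CartesianMonoidalCategory.lift (𝟙 A) (constE A s)

/-- Two maps `f g : A ⟶ Z` are `E¹`-homotopic if there is a homotopy
`H : A × E¹ ⟶ Z` restricting to `f` on `A × {0}` and to `g` on `A × {1}`. -/
def E1Homotopic {A Z : SSet} (f g : A ⟶ Z) : Prop :=
  ∃ H : A ⊗ E (Fin 2) ⟶ Z, incE1 A 0 ≫ H = f ∧ incE1 A 1 ≫ H = g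

/-- The set `[A, Z]_{E¹}` of `E¹`-homotopy classes of maps `A ⟶ Z`. -/
def E1Classes (A Z : SSet) : Type :=
  Quot (@E1Homotopic A Z)

lemma incE1_whiskerRight {A B : SSet} (f : A ⟶ B) (s : Fin 2) :
    incE1 A s ≫ (f ▷ E (Fin 2)) = f ≫ incE1 B s := rfl

/-- Precomposition `[B, Z]_{E¹} → [A, Z]_{E¹}` with a map `f : A ⟶ B`. -/
noncomputable def E1Precomp {A B : SSet} (f : A ⟶ B) (Z : SSet) :
    E1Classes B Z → E1Classes A Z :=
  Quot.map (fun g => f ≫ g) (by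
    rintro g g' ⟨H, h0, h1⟩
    refine ⟨(f ▷ E (Fin 2)) ≫ H, ?_, ?_⟩
    · rw [← Category.assoc, incE1_whiskerRight, Category.assoc, h0]
    · rw [← Category.assoc, incE1_whiskerRight, Category.assoc, h1])

/-- A map of simplicial sets `f : A ⟶ B` is a Joyal equivalence if
`[B, Z]_{E¹} → [A, Z]_{E¹}` is a bijection for every quasicategory `Z`. -/
def JoyalEquiv {A B : SSet} (f : A ⟶ B) : Prop :=
  ∀ (Z : SSet), SSet.Quasicategory Z → Function.Bijective (E1Precomp f Z)

end Paper

noncomputable instance : MonoidalClosed SSet.{0} :=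
  (inferInstance : MonoidalClosed (SimplexCategoryᵒᵖ ⥤ Type 0))

namespace Paper

/-- The matching map `X^B ⟶ X^A ×_{Y^A} Y^B` induced by `i : A ⟶ B` and `p : X ⟶ Y`,
where `X^A = (ihom A).obj X` is the internal mapping object. -/
noncomputable def matchingMap {A B X Y : SSet.{0}} (i : A ⟶ B) (p : X ⟶ Y) :
    (ihom B).obj X ⟶ pullback ((ihom A).map p) ((MonoidalClosed.pre i).app Y) :=
  pullback.lift ((MonoidalClosed.pre i).app X) ((ihom B).map p)
    ((MonoidalClosed.pre i).naturality p).symm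

lemma innerFibration_iff_sSet {X Y : SSet} (p : X ⟶ Y) :
    InnerFibration p ↔ SSet.InnerFibration p := by
  rw [SSet.innerFibration_iff]
  exact ⟨fun h _ _ _ ⟨i, h0, hn⟩ ↦ h _ i h0 hn,
    fun h _ _ h0 hn ↦ h _ (SSet.horn_ι_mem_innerHornInclusions h0 hn)⟩

lemma matchingMap_eq_pullbackObjObj_π {A B X Y : SSet} (i : A ⟶ B) (p : X ⟶ Y) :
    matchingMap i p =
      (Functor.PullbackObjObj.ofHasPullback MonoidalClosed.internalHom i p).π :=
  rfl

/-- If `A ⟶ B` is a monomorphism of simplicial sets and `X ⟶ Y` is an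
inner fibration, then the induced map `X^B ⟶ X^A ×_{Y^A} Y^B` is an inner fibration.
In particular, if `X` is a quasicategory then so is the internal mapping object `X^A`
for every simplicial set `A`. -/
theorem statement6 :
    (∀ {A B X Y : SSet} (i : A ⟶ B), Mono i → ∀ (p : X ⟶ Y), InnerFibration p →
      InnerFibration (matchingMap i p)) ∧
    (∀ (X : SSet), SSet.Quasicategory X → ∀ (A : SSet),
      SSet.Quasicategory ((ihom A).obj X)) := by
  refine ⟨fun i _ p hp ↦ ?_, fun _ _ _ ↦ inferInstance⟩
  have := (innerFibration_iff_sSet p).mp hp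
  rw [innerFibration_iff_sSet, matchingMap_eq_pullbackObjObj_π]
  exact SSet.innerFibration_pullbackObjObjπ _

end Paper
end

section
/- Let X be a quasi-category, and let f, g, h be 1-simplices of X with d₁f = a, d₀f = d₁g = b, d₀g = c, d₁h = a, d₀h = c. Then h = g ∘ f holds in the homotopy category π₀𝔠(X) if and only if there exists a 2-simplex σ : Δ² → X with d₀σ = g, d₁σ = h, and d₂σ = f. -/
/-!
Inner horn filling in dimensions 2 and 3 makes the 2-truncation of a quasicategory `X` a
`Quasicategory₂`. Its homotopy category `HomotopyCategory₂` has homotopy classes of edges as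
morphisms, and there `[g] ∘ [f] = [h]` holds exactly when some 2-simplex has faces `g, h, f`
(`Edge.CompStruct.nonempty_iff`). The relations defining `π₀𝔠(X)` hold in `HomotopyCategory₂`,
so `π₀𝔠(X)` maps to it, and an equation `h = g ∘ f` in `π₀𝔠(X)` yields a 2-simplex. Conversely
a 2-simplex is itself one of the defining relations of `π₀𝔠(X)`.
-/

open CategoryTheory Simplicial Opposite Limits MonoidalCategory

namespace Paper

/-- The underlying quiver of a simplicial set `X`: objects are the 0-simplices,
and arrows from `a` to `b` are the 1-simplices `f` with `d₁ f = a` and `d₀ f = b`. -/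
def HoQuiv (X : SSet) : Type := X _⦋0⦌

instance (X : SSet) : Quiver (HoQuiv X) :=
  ⟨fun a b => {f : X _⦋1⦌ // X.δ 1 f = a ∧ X.δ 0 f = b}⟩

/-- The morphism of the free category on the quiver of `X` given by a single
1-simplex `f` with `d₁ f = a` and `d₀ f = b`. -/
def pathMk (X : SSet) {a b : HoQuiv X} (f : X _⦋1⦌)
    (h1 : X.δ 1 f = a) (h0 : X.δ 0 f = b) :
    (Paths.of (HoQuiv X)).obj a ⟶ (Paths.of (HoQuiv X)).obj b :=
  Quiver.Hom.toPath (V := HoQuiv X) ⟨f, h1, h0⟩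

/-- The relations defining the homotopy category `π₀𝔠(X)`: for each 0-simplex `a`
the degenerate 1-simplex `s₀ a` is identified with the identity of `a`, and for each
2-simplex `σ` the composite `d₀σ ∘ d₂σ` is identified with `d₁σ`. -/
inductive HoRel (X : SSet) : HomRel (Paths (HoQuiv X)) where
  | degen (a : HoQuiv X) (h1 : X.δ 1 (X.σ 0 a) = a) (h0 : X.δ 0 (X.σ 0 a) = a) :
      HoRel X (pathMk X (X.σ 0 a) h1 h0) (𝟙 ((Paths.of (HoQuiv X)).obj a))
  /-- The relation `d₀σ ∘ d₂σ = d₁σ` for a 2-simplex `σ`. -/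
  | comp (σ : X _⦋2⦌) (a b c : HoQuiv X)
      (hf1 : X.δ 1 (X.δ 2 σ) = a) (hf0 : X.δ 0 (X.δ 2 σ) = b)
      (hg1 : X.δ 1 (X.δ 0 σ) = b) (hg0 : X.δ 0 (X.δ 0 σ) = c)
      (hh1 : X.δ 1 (X.δ 1 σ) = a) (hh0 : X.δ 0 (X.δ 1 σ) = c) :
      HoRel X (pathMk X (X.δ 2 σ) hf1 hf0 ≫ pathMk X (X.δ 0 σ) hg1 hg0)
        (pathMk X (X.δ 1 σ) hh1 hh0)

/-- The homotopy category `π₀𝔠(X)` of a simplicial set `X`: the category with objects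
the 0-simplices of `X`, generated by the 1-simplices subject to the relations
`s₀ a = id_a` and `d₁σ = d₀σ ∘ d₂σ`.  (This is the value at `X` of the left adjoint
of the classical nerve functor.) -/
def HoCat (X : SSet) : Type := CategoryTheory.Quotient (HoRel X)

instance (X : SSet) : Category (HoCat X) :=
  inferInstanceAs (Category (CategoryTheory.Quotient (HoRel X)))

/-- The object of `π₀𝔠(X)` corresponding to a 0-simplex. -/
def hoObj (X : SSet) (a : X _⦋0⦌) : HoCat X :=
  (CategoryTheory.Quotient.functor (HoRel X)).obj ((Paths.of (HoQuiv X)).obj a)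

/-- The morphism of `π₀𝔠(X)` represented by a 1-simplex `f` with `d₁ f = a` and
`d₀ f = b`. -/
def hoMk (X : SSet) {a b : X _⦋0⦌} (f : X _⦋1⦌)
    (h1 : X.δ 1 f = a) (h0 : X.δ 0 f = b) :
    hoObj X a ⟶ hoObj X b :=
  (CategoryTheory.Quotient.functor (HoRel X)).map (pathMk X f h1 h0)

end Paper

namespace SSet

universe u

variable {X : SSet.{u}} [X.Quasicategory]

lemma Quasicategory.exists_simplex_of_compatible_faces {n : ℕ} {i : Fin (n + 3)}
    (h₀ : 0 < i) (hₙ : i < Fin.last (n + 2)) (F : ∀ j : Fin (n + 3), j ≠ i → X _⦋n + 1⦌)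
    (hF : ∀ (j k : Fin (n + 3)) (hj : j ≠ i) (hk : k ≠ i) (hjk : j < k),
      X.δ (k.pred (Fin.ne_zero_of_lt hjk)) (F j hj) =
        X.δ (j.castPred (Fin.ne_last_of_lt hjk)) (F k hk)) :
    ∃ s : X _⦋n + 2⦌, ∀ j hj, X.δ j s = F j hj := by
  have hcompat : horn.IsCompatible fun j hj ↦ yonedaEquiv.symm (F j hj) := by
    intro j k hj hk hjk
    simp only [stdSimplex.δ_comp_yonedaEquiv_symm, hF j k hj hk hjk]
  obtain ⟨σ, hσ⟩ := Quasicategory.hornFilling h₀ hₙ hcompat.desc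
  refine ⟨yonedaEquiv σ, fun j hj ↦ ?_⟩
  rw [← stdSimplex.yonedaEquiv_δ_comp, ← horn.ι_ι_assoc i j hj, ← hσ, hcompat.ι_desc,
    Equiv.apply_symm_apply]

lemma Quasicategory.exists_filler₂₁ (p q : X _⦋1⦌) (h : X.δ 0 p = X.δ 1 q) :
    ∃ σ : X _⦋2⦌, X.δ 2 σ = p ∧ X.δ 0 σ = q := by
  obtain ⟨σ, hσ⟩ := exists_simplex_of_compatible_faces (i := 1) (by decide) (by decide)
    (fun j _ ↦ if j = 0 then q else p) (by
      intro j k hj hk hjk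
      fin_cases j <;> fin_cases k <;> simp [*] at hj hk hjk ⊢)
  exact ⟨σ, by simpa using hσ 2 (by decide), by simpa using hσ 0 (by decide)⟩

lemma Quasicategory.exists_filler₃₁ (f₀ f₂ f₃ : X _⦋2⦌)
    (h₁₂ : X.δ 2 f₀ = X.δ 0 f₃) (h₁₃ : X.δ 1 f₀ = X.δ 0 f₂) (h₂₃ : X.δ 2 f₂ = X.δ 2 f₃) :
    ∃ s : X _⦋3⦌, X.δ 0 s = f₀ ∧ X.δ 2 s = f₂ ∧ X.δ 3 s = f₃ := by
  obtain ⟨s, hs⟩ := exists_simplex_of_compatible_faces (i := 1) (by decide) (by decide)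
    (fun j _ ↦ if j = 0 then f₀ else if j = 2 then f₂ else f₃) (by
      intro j k hj hk hjk
      fin_cases j <;> fin_cases k <;> simp [*] at hj hk hjk ⊢
      -- `simp` leaves `Fin.castPred 2 _` unevaluated
      rfl)
  exact ⟨s, by simpa using hs 0 (by decide), by simpa using hs 2 (by decide),
    by simpa using hs 3 (by decide)⟩

lemma Quasicategory.exists_filler₃₂ (f₀ f₁ f₃ : X _⦋2⦌)
    (h₀₂ : X.δ 2 f₁ = X.δ 1 f₃) (h₁₂ : X.δ 2 f₀ = X.δ 0 f₃) (h₂₃ : X.δ 0 f₀ = X.δ 0 f₁) :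
    ∃ s : X _⦋3⦌, X.δ 0 s = f₀ ∧ X.δ 1 s = f₁ ∧ X.δ 3 s = f₃ := by
  obtain ⟨s, hs⟩ := exists_simplex_of_compatible_faces (i := 2) (by decide) (by decide)
    (fun j _ ↦ if j = 0 then f₀ else if j = 1 then f₁ else f₃) (by
      intro j k hj hk hjk
      fin_cases j <;> fin_cases k <;> simp [*] at hj hk hjk ⊢)
  exact ⟨s, by simpa using hs 0 (by decide), by simpa using hs 1 (by decide),
    by simpa using hs 3 (by decide)⟩

section

variable {x₀ x₁ x₂ x₃ : X _⦋0⦌}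

lemma Quasicategory.nonempty_compStruct (e₀₁ : Edge x₀ x₁) (e₁₂ : Edge x₁ x₂) :
    Nonempty (Σ e₀₂ : Edge x₀ x₂, Edge.CompStruct e₀₁ e₁₂ e₀₂) := by
  obtain ⟨σ, h₂, h₀⟩ :=
    exists_filler₂₁ e₀₁.edge e₁₂.edge (e₀₁.tgt_eq.trans e₁₂.src_eq.symm)
  refine ⟨⟨Edge.mk (X.δ 1 σ) ?_ ?_, Edge.CompStruct.mk σ h₂ h₀ rfl⟩⟩
  · rw [show X.δ 1 (X.δ 1 σ) = X.δ 1 (X.δ 2 σ) from δ_comp_δ_self_apply σ, h₂, e₀₁.src_eq]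
  · rw [show X.δ 0 (X.δ 1 σ) = X.δ 0 (X.δ 0 σ) from (δ_comp_δ_self_apply σ).symm, h₀,
      e₁₂.tgt_eq]

variable {e₀₁ : Edge x₀ x₁} {e₁₂ : Edge x₁ x₂} {e₂₃ : Edge x₂ x₃} {e₀₂ : Edge x₀ x₂}
  {e₁₃ : Edge x₁ x₃} {e₀₃ : Edge x₀ x₃}

lemma Quasicategory.nonempty_compStruct_of_horn₃₁ (f₃ : Edge.CompStruct e₀₁ e₁₂ e₀₂)
    (f₀ : Edge.CompStruct e₁₂ e₂₃ e₁₃) (f₂ : Edge.CompStruct e₀₁ e₁₃ e₀₃) :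
    Nonempty (Edge.CompStruct e₀₂ e₂₃ e₀₃) := by
  obtain ⟨s, h₀, h₂, h₃⟩ := exists_filler₃₁ f₀.simplex f₂.simplex f₃.simplex
    (f₀.d₂.trans f₃.d₀.symm) (f₀.d₁.trans f₂.d₀.symm) (f₂.d₂.trans f₃.d₂.symm)
  refine ⟨Edge.CompStruct.mk (X.δ 1 s) ?_ ?_ ?_⟩
  · rw [show X.δ 2 (X.δ 1 s) = X.δ 1 (X.δ 3 s) from
      (δ_comp_δ_apply (i := 1) (j := 2) (by decide) s).symm, h₃, f₃.d₁]
  · rw [show X.δ 0 (X.δ 1 s) = X.δ 0 (X.δ 0 s) from (δ_comp_δ_self_apply s).symm, h₀, f₀.d₀]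
  · rw [show X.δ 1 (X.δ 1 s) = X.δ 1 (X.δ 2 s) from δ_comp_δ_self_apply s, h₂, f₂.d₁]

lemma Quasicategory.nonempty_compStruct_of_horn₃₂ (f₃ : Edge.CompStruct e₀₁ e₁₂ e₀₂)
    (f₀ : Edge.CompStruct e₁₂ e₂₃ e₁₃) (f₁ : Edge.CompStruct e₀₂ e₂₃ e₀₃) :
    Nonempty (Edge.CompStruct e₀₁ e₁₃ e₀₃) := by
  obtain ⟨s, h₀, h₁, h₃⟩ := exists_filler₃₂ f₀.simplex f₁.simplex f₃.simplex
    (f₁.d₂.trans f₃.d₁.symm) (f₀.d₂.trans f₃.d₀.symm) (f₀.d₀.trans f₁.d₀.symm)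
  refine ⟨Edge.CompStruct.mk (X.δ 2 s) ?_ ?_ ?_⟩
  · rw [show X.δ 2 (X.δ 2 s) = X.δ 2 (X.δ 3 s) from δ_comp_δ_self_apply s, h₃, f₃.d₂]
  · rw [show X.δ 0 (X.δ 2 s) = X.δ 1 (X.δ 0 s) from
      δ_comp_δ_apply (i := 0) (j := 1) (by decide) s, h₀, f₀.d₁]
  · rw [show X.δ 1 (X.δ 2 s) = X.δ 1 (X.δ 1 s) from (δ_comp_δ_self_apply s).symm, h₁, f₁.d₁]

instance Quasicategory.quasicategory₂_truncation : ((truncation 2).obj X).Quasicategory₂ where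
  fill21 := nonempty_compStruct
  fill31 := nonempty_compStruct_of_horn₃₁
  fill32 := nonempty_compStruct_of_horn₃₂

end

end SSet

namespace Paper

open SSet
open SSet.Truncated (HomotopyCategory₂)

section

variable {X : SSet.{0}}

lemma hoMk_comp_hoMk_of_simplex (σ : X _⦋2⦌) {a b c : X _⦋0⦌}
    (hf1 : X.δ 1 (X.δ 2 σ) = a) (hf0 : X.δ 0 (X.δ 2 σ) = b)
    (hg1 : X.δ 1 (X.δ 0 σ) = b) (hg0 : X.δ 0 (X.δ 0 σ) = c)
    (hh1 : X.δ 1 (X.δ 1 σ) = a) (hh0 : X.δ 0 (X.δ 1 σ) = c) :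
    hoMk X (X.δ 2 σ) hf1 hf0 ≫ hoMk X (X.δ 0 σ) hg1 hg0 = hoMk X (X.δ 1 σ) hh1 hh0 :=
  ((CategoryTheory.Quotient.functor (HoRel X)).map_comp _ _).symm.trans
    (CategoryTheory.Quotient.sound _ (HoRel.comp σ a b c hf1 hf0 hg1 hg0 hh1 hh0))

variable [X.Quasicategory]

noncomputable def hoQuivToHomotopyCategory₂ :
    HoQuiv X ⥤q HomotopyCategory₂ ((truncation 2).obj X) where
  obj a := HomotopyCategory₂.mk a
  map e := HomotopyCategory₂.homMk (Edge.mk e.1 e.2.1 e.2.2).toTruncated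

lemma paths_lift_hoQuivToHomotopyCategory₂_map_pathMk {a b : HoQuiv X} (f : X _⦋1⦌)
    (h1 : X.δ 1 f = a) (h0 : X.δ 0 f = b) :
    (Paths.lift hoQuivToHomotopyCategory₂).map (pathMk X f h1 h0) =
      HomotopyCategory₂.homMk (Edge.mk f h1 h0).toTruncated :=
  Paths.lift_toPath _ _

noncomputable def hoCatToHomotopyCategory₂ :
    HoCat X ⥤ HomotopyCategory₂ ((truncation 2).obj X) :=
  CategoryTheory.Quotient.lift (HoRel X) (Paths.lift hoQuivToHomotopyCategory₂) (by
    rintro _ _ _ _ (⟨a, h1, h0⟩ | ⟨σ, a, b, c, hf1, hf0, hg1, hg0, hh1, hh0⟩)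
    · exact (paths_lift_hoQuivToHomotopyCategory₂_map_pathMk _ _ _).trans
        (HomotopyCategory₂.homMk_id _)
    · rw [Functor.map_comp, paths_lift_hoQuivToHomotopyCategory₂_map_pathMk,
        paths_lift_hoQuivToHomotopyCategory₂_map_pathMk,
        paths_lift_hoQuivToHomotopyCategory₂_map_pathMk]
      exact (Edge.CompStruct.mk (e₀₁ := Edge.mk _ hf1 hf0) (e₁₂ := Edge.mk _ hg1 hg0)
        (e₀₂ := Edge.mk _ hh1 hh0) σ).toTruncated.homotopyCategory₂_fac)

lemma hoCatToHomotopyCategory₂_map_hoMk {a b : X _⦋0⦌} (f : X _⦋1⦌) (h1 : X.δ 1 f = a)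
    (h0 : X.δ 0 f = b) :
    hoCatToHomotopyCategory₂.map (hoMk X f h1 h0) =
      HomotopyCategory₂.homMk (Edge.mk f h1 h0).toTruncated :=
  paths_lift_hoQuivToHomotopyCategory₂_map_pathMk f h1 h0

end

/-- Let `X` be a quasicategory and `f`, `g`, `h` 1-simplices of `X`
with `d₁f = a`, `d₀f = d₁g = b`, `d₀g = c`, `d₁h = a`, `d₀h = c`.  Then `h = g ∘ f`
in the homotopy category `π₀𝔠(X)` if and only if there is a 2-simplex `σ` of `X`
with `d₀σ = g`, `d₁σ = h` and `d₂σ = f`. -/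
theorem statement10 (X : SSet) [SSet.Quasicategory X] (f g h : X _⦋1⦌) (a b c : X _⦋0⦌)
    (hf1 : X.δ 1 f = a) (hf0 : X.δ 0 f = b) (hg1 : X.δ 1 g = b) (hg0 : X.δ 0 g = c)
    (hh1 : X.δ 1 h = a) (hh0 : X.δ 0 h = c) :
    hoMk X f hf1 hf0 ≫ hoMk X g hg1 hg0 = hoMk X h hh1 hh0 ↔
      ∃ σ : X _⦋2⦌, X.δ 0 σ = g ∧ X.δ 1 σ = h ∧ X.δ 2 σ = f := by
  constructor
  · intro hfac
    have hfac₂ := congrArg hoCatToHomotopyCategory₂.map hfac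
    rw [Functor.map_comp, hoCatToHomotopyCategory₂_map_hoMk, hoCatToHomotopyCategory₂_map_hoMk,
      hoCatToHomotopyCategory₂_map_hoMk] at hfac₂
    obtain ⟨τ⟩ := Truncated.Edge.CompStruct.nonempty_iff.mpr hfac₂
    exact ⟨τ.simplex, τ.d₀, τ.d₁, τ.d₂⟩
  · rintro ⟨σ, rfl, rfl, rfl⟩
    exact hoMk_comp_hoMk_of_simplex σ hf1 hf0 hg1 hg0 hh1 hh0

end Paper
end
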